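/- arXiv:2001.03834 — 2 statements merged into one kernel-verified Lean document; each statement's English description precedes it below -/
import Mathlib

section
/- Let ζ = exp(πi/31) ∈ ℂ. Then [20]_ζ [21]_ζ [24]_ζ [25]_ζ [30]_ζ [33]_ζ = −[1]_ζ [2]_ζ [6]_ζ [7]_ζ [10]_ζ [11]_ζ; equivalently, the quantum dimension of the representation V(2Λ_8) of the simple Lie algebra of type E₈ at ζ, namely ([20]_ζ [21]_ζ [24]_ζ [25]_ζ [30]_ζ [33]_ζ)/([1]_ζ [2]_ζ [6]_ζ [7]_ζ [10]_ζ [11]_ζ), equals −1. -/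
open Complex

/-- `ζ = exp(πi/m)`, a primitive `2m`-th root of unity. -/
noncomputable def zeta (m : ℕ) : ℂ := Complex.exp (Real.pi * Complex.I / m)

/-- The `ζ`-integer `[n]_ζ = (ζ^n - ζ^{-n})/(ζ - ζ⁻¹)` for `ζ = exp(πi/m)`. -/
noncomputable def qint (m : ℕ) (n : ℤ) : ℂ :=
  (zeta m ^ n - zeta m ^ (-n)) / (zeta m - (zeta m)⁻¹)

lemma zeta31_prim : IsPrimitiveRoot (zeta 31) 62 := by
  have h := Complex.isPrimitiveRoot_exp 62 (by norm_num)
  have he : zeta 31 = Complex.exp (2 * Real.pi * Complex.I / 62) := by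
    unfold zeta; congr 1; push_cast; ring
  rw [he]; exact h

lemma zeta31_ne_zero : zeta 31 ≠ 0 := Complex.exp_ne_zero _

lemma zeta31_pow31 : zeta 31 ^ (31 : ℤ) = -1 := by
  have : zeta 31 ^ (31 : ℕ) = -1 := by
    unfold zeta
    rw [← Complex.exp_nat_mul]
    have harg : ((31:ℕ):ℂ) * (Real.pi * Complex.I / ((31:ℕ):ℂ)) = Real.pi * Complex.I := by
      have h31 : ((31:ℕ):ℂ) ≠ 0 := by norm_num
      field_simp
    rw [harg]
    exact Complex.exp_pi_mul_I
  exact_mod_cast this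

lemma qint_add (n : ℤ) : qint 31 (n + 31) = - qint 31 n := by
  unfold qint
  have hz := zeta31_ne_zero
  rw [zpow_add₀ hz, neg_add, zpow_add₀ hz]
  simp only [zpow_neg, zeta31_pow31, inv_neg, inv_one]
  ring

lemma qint_neg (n : ℤ) : qint 31 (-n) = - qint 31 n := by
  unfold qint
  rw [neg_neg]
  ring

lemma qint_ne_zero (n : ℤ) (h : ¬ (62 : ℤ) ∣ 2 * n) : qint 31 n ≠ 0 := by
  have hz := zeta31_ne_zero
  have hprim := zeta31_prim
  unfold qint
  apply div_ne_zero
  · intro he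
    apply h
    have heq : zeta 31 ^ n = zeta 31 ^ (-n) := sub_eq_zero.mp he
    have h2 : zeta 31 ^ (2 * n) = 1 := by
      rw [two_mul, zpow_add₀ hz]
      nth_rewrite 1 [heq]
      rw [← zpow_add₀ hz]
      simp
    have := (hprim.zpow_eq_one_iff_dvd (2 * n)).mp h2
    exact_mod_cast this
  · intro he
    have heq : zeta 31 = (zeta 31)⁻¹ := sub_eq_zero.mp he
    have h2 : zeta 31 ^ (2 : ℕ) = 1 := by
      rw [pow_two]
      nth_rewrite 1 [heq]
      exact inv_mul_cancel₀ hz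
    have := (hprim.pow_eq_one_iff_dvd 2).mp h2
    norm_num at this

theorem qdim_E8_twoLambda8 :
    qint 31 20 * qint 31 21 * qint 31 24 * qint 31 25 * qint 31 30 * qint 31 33 =
        -(qint 31 1 * qint 31 2 * qint 31 6 * qint 31 7 * qint 31 10 * qint 31 11) ∧
      qint 31 20 * qint 31 21 * qint 31 24 * qint 31 25 * qint 31 30 * qint 31 33 /
        (qint 31 1 * qint 31 2 * qint 31 6 * qint 31 7 * qint 31 10 * qint 31 11) = -1 := by
  have key : ∀ n : ℤ, qint 31 (31 - n) = qint 31 n := by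
    intro n
    have h := qint_add (-n)
    rw [show -n + 31 = 31 - n by ring] at h
    rw [h, qint_neg, neg_neg]
  have h20 : qint 31 20 = qint 31 11 := by have := key 11; norm_num at this; exact this
  have h21 : qint 31 21 = qint 31 10 := by have := key 10; norm_num at this; exact this
  have h24 : qint 31 24 = qint 31 7 := by have := key 7; norm_num at this; exact this
  have h25 : qint 31 25 = qint 31 6 := by have := key 6; norm_num at this; exact this
  have h30 : qint 31 30 = qint 31 1 := by have := key 1; norm_num at this; exact this
  have h33 : qint 31 33 = - qint 31 2 := by have := qint_add 2; norm_num at this; exact this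
  have heq : qint 31 20 * qint 31 21 * qint 31 24 * qint 31 25 * qint 31 30 * qint 31 33 =
      -(qint 31 1 * qint 31 2 * qint 31 6 * qint 31 7 * qint 31 10 * qint 31 11) := by
    rw [h20, h21, h24, h25, h30, h33]; ring
  refine ⟨heq, ?_⟩
  have hD : qint 31 1 * qint 31 2 * qint 31 6 * qint 31 7 * qint 31 10 * qint 31 11 ≠ 0 := by
    have h1 := qint_ne_zero 1 (by norm_num)
    have h2 := qint_ne_zero 2 (by norm_num)
    have h6 := qint_ne_zero 6 (by norm_num)
    have h7 := qint_ne_zero 7 (by norm_num)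
    have h10 := qint_ne_zero 10 (by norm_num)
    have h11 := qint_ne_zero 11 (by norm_num)
    exact mul_ne_zero (mul_ne_zero (mul_ne_zero (mul_ne_zero (mul_ne_zero h1 h2) h6) h7) h10) h11
  rw [heq, neg_div, div_self hD]
end

section
/- Let ζ = exp(πi/31) ∈ ℂ. Then [15]_ζ [18]_ζ [20]_ζ [21]_ζ [24]_ζ [25]_ζ [26]_ζ [27]_ζ [30]_ζ [32]_ζ [33]_ζ [35]_ζ = −[1]_ζ² [2]_ζ [4]_ζ² [5]_ζ [6]_ζ [7]_ζ [10]_ζ [11]_ζ [13]_ζ [16]_ζ; equivalently, the quantum dimension of the representation V(Λ_6 + Λ_8) of the simple Lie algebra of type E₈ at ζ, namely the quotient of the left-hand product by the product [1]_ζ² [2]_ζ [4]_ζ² [5]_ζ [6]_ζ [7]_ζ [10]_ζ [11]_ζ [13]_ζ [16]_ζ, equals −1. -/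
/-!
Since `ζ^31 = -1`, the `ζ`-integers satisfy `[31 - k] = [k]` and `[31 + k] = -[k]`. These turn
the twelve factors on the left into the factors on the right, with the three factors
`[32], [33], [35]` contributing the sign `(-1)^3`. The quotient is then `-1` because `[k] ≠ 0`
for `0 < k < 31`, `ζ` being a primitive `62`-nd root of unity.
-/

open Complex

section

variable {m : ℕ}

lemma zeta_ne_zero (m : ℕ) : zeta m ≠ 0 := Complex.exp_ne_zero _

lemma zeta_pow_self (hm : m ≠ 0) : zeta m ^ m = -1 := by
  rw [zeta, ← Complex.exp_nat_mul, mul_div_cancel₀ _ (Nat.cast_ne_zero.mpr hm), exp_pi_mul_I]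

lemma isPrimitiveRoot_zeta (hm : m ≠ 0) : IsPrimitiveRoot (zeta m) (2 * m) := by
  rw [zeta]
  convert Complex.isPrimitiveRoot_exp (2 * m) (by positivity) using 2
  push_cast
  field_simp

lemma zeta_zpow_self_add (hm : m ≠ 0) (k : ℤ) : zeta m ^ ((m : ℤ) + k) = -zeta m ^ k := by
  rw [zpow_add₀ (zeta_ne_zero m), zpow_natCast, zeta_pow_self hm, neg_one_mul]

lemma zeta_zpow_sub_self (hm : m ≠ 0) (k : ℤ) : zeta m ^ (k - m) = -zeta m ^ k := by
  rw [zpow_sub₀ (zeta_ne_zero m), zpow_natCast, zeta_pow_self hm, div_neg, div_one]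

lemma qint_eq_of_add_eq (hm : m ≠ 0) {a b : ℤ} (hab : a + b = m) : qint m a = qint m b := by
  obtain rfl : a = m - b := eq_sub_of_add_eq hab
  rw [qint, qint, neg_sub, sub_eq_add_neg (m : ℤ), zeta_zpow_self_add hm, zeta_zpow_sub_self hm]
  ring

lemma qint_eq_neg_of_sub_eq (hm : m ≠ 0) {a b : ℤ} (hab : a - b = m) :
    qint m a = -qint m b := by
  obtain rfl : a = m + b := eq_add_of_sub_eq hab
  rw [qint, qint, neg_add_rev, ← sub_eq_add_neg, zeta_zpow_self_add hm, zeta_zpow_sub_self hm]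
  ring

lemma zeta_zpow_sub_zpow_neg_ne_zero (hm : m ≠ 0) {n : ℤ} (hn : ¬ (m : ℤ) ∣ n) :
    zeta m ^ n - zeta m ^ (-n) ≠ 0 := by
  refine sub_ne_zero.mpr fun h ↦ hn ?_
  have h2n : zeta m ^ (n - -n) = 1 := by
    rw [zpow_sub₀ (zeta_ne_zero m), h, div_self (zpow_ne_zero _ (zeta_ne_zero m))]
  have := ((isPrimitiveRoot_zeta hm).zpow_eq_one_iff_dvd _).mp h2n
  rw [sub_neg_eq_add, ← two_mul, Nat.cast_mul, Nat.cast_two] at this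
  exact (mul_dvd_mul_iff_left two_ne_zero).mp this

lemma qint_ne_zero_s14 (hm : 1 < m) {n : ℤ} (hn : ¬ (m : ℤ) ∣ n) : qint m n ≠ 0 := by
  have hm₀ : m ≠ 0 := by omega
  have h1 : ¬ (m : ℤ) ∣ 1 := by
    rw [Int.natCast_dvd_ofNat]
    exact Nat.not_dvd_of_pos_of_lt one_pos hm
  refine div_ne_zero (zeta_zpow_sub_zpow_neg_ne_zero hm₀ hn) ?_
  simpa only [zpow_one, zpow_neg_one] using zeta_zpow_sub_zpow_neg_ne_zero hm₀ h1

end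

theorem qdim_E8_Lambda6_Lambda8 :
    qint 31 15 * qint 31 18 * qint 31 20 * qint 31 21 * qint 31 24 * qint 31 25 *
        qint 31 26 * qint 31 27 * qint 31 30 * qint 31 32 * qint 31 33 * qint 31 35 =
        -(qint 31 1 ^ 2 * qint 31 2 * qint 31 4 ^ 2 * qint 31 5 * qint 31 6 * qint 31 7 *
          qint 31 10 * qint 31 11 * qint 31 13 * qint 31 16) ∧
      qint 31 15 * qint 31 18 * qint 31 20 * qint 31 21 * qint 31 24 * qint 31 25 *
          qint 31 26 * qint 31 27 * qint 31 30 * qint 31 32 * qint 31 33 * qint 31 35 /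
        (qint 31 1 ^ 2 * qint 31 2 * qint 31 4 ^ 2 * qint 31 5 * qint 31 6 * qint 31 7 *
          qint 31 10 * qint 31 11 * qint 31 13 * qint 31 16) = -1 := by
  have reflect (a b : ℤ) (h : a + b = 31 := by norm_num) : qint 31 a = qint 31 b :=
    qint_eq_of_add_eq (by norm_num) h
  have shift (a b : ℤ) (h : a - b = 31 := by norm_num) : qint 31 a = -qint 31 b :=
    qint_eq_neg_of_sub_eq (by norm_num) h
  have hnum : qint 31 15 * qint 31 18 * qint 31 20 * qint 31 21 * qint 31 24 * qint 31 25 *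
      qint 31 26 * qint 31 27 * qint 31 30 * qint 31 32 * qint 31 33 * qint 31 35 =
      -(qint 31 1 ^ 2 * qint 31 2 * qint 31 4 ^ 2 * qint 31 5 * qint 31 6 * qint 31 7 *
        qint 31 10 * qint 31 11 * qint 31 13 * qint 31 16) := by
    rw [reflect 15 16, reflect 18 13, reflect 20 11, reflect 21 10, reflect 24 7, reflect 25 6,
      reflect 26 5, reflect 27 4, reflect 30 1, shift 32 1, shift 33 2, shift 35 4]
    ring
  have hden : qint 31 1 ^ 2 * qint 31 2 * qint 31 4 ^ 2 * qint 31 5 * qint 31 6 * qint 31 7 *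
      qint 31 10 * qint 31 11 * qint 31 13 * qint 31 16 ≠ 0 := by
    repeat' first | apply qint_ne_zero_s14 | apply pow_ne_zero | apply mul_ne_zero
    all_goals norm_num
  exact ⟨hnum, by rw [hnum, neg_div, div_self hden]⟩
end
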